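/- Bounded terms form a lower set in the size order: if Γ ⊢ N ≤ M : A in PCFc and M is bounded (i.e., M evaluates to some canonical form), then N is bounded. -/

import Mathlib

set_option linter.unusedVariables false
namespace PCFc

/-- The arithmetic operations of PCF. -/
inductive Op | add | mul | sub | div | mod
deriving DecidableEq

def Op.den : Op → ℕ → ℕ → ℕ
  | .add, a, b => a + b
  | .mul, a, b => a * b
  | .sub, a, b => a - b
  | .div, a, b => a / b
  | .mod, a, b => a % b

/-- Types of PCFc: natural numbers, costs, products and functions. -/
inductive Ty
  | nat | cost
  | prod (A B : Ty)
  | arrow (A B : Ty)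
deriving DecidableEq

/-- Raw terms of PCFc in de Bruijn representation. `proj true` is the first
projection.  `czero`, `cone`, `cadd` are the cost constructs `0̂`, `1̂`, `⊞`. -/
inductive Tm
  | var : ℕ → Tm
  | num : ℕ → Tm
  | op : Op → Tm → Tm → Tm
  | ifz : Tm → Tm → Tm → Tm
  | pair : Tm → Tm → Tm
  | proj : Bool → Tm → Tm
  | lam : Tm → Tm
  | app : Tm → Tm → Tm
  | fix : Tm → Tm
  | czero : Tm
  | cone : Tm
  | cadd : Tm → Tm → Tm
deriving DecidableEq

/-- Shift (by one) the de Bruijn variables `≥ c`. -/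
def shift (c : ℕ) : Tm → Tm
  | .var n => if n < c then .var n else .var (n + 1)
  | .num n => .num n
  | .op o M N => .op o (shift c M) (shift c N)
  | .ifz M P Q => .ifz (shift c M) (shift c P) (shift c Q)
  | .pair M N => .pair (shift c M) (shift c N)
  | .proj b M => .proj b (shift c M)
  | .lam M => .lam (shift (c + 1) M)
  | .app M N => .app (shift c M) (shift c N)
  | .fix M => .fix (shift (c + 1) M)
  | .czero => .czero
  | .cone => .cone
  | .cadd M N => .cadd (shift c M) (shift c N)

/-- Capture-avoiding substitution of `s` for the de Bruijn variable `k`. -/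
def subst (s : Tm) : ℕ → Tm → Tm
  | k, .var n => if n = k then (shift 0)^[k] s else if k < n then .var (n - 1) else .var n
  | k, .num n => .num n
  | k, .op o M N => .op o (subst s k M) (subst s k N)
  | k, .ifz M P Q => .ifz (subst s k M) (subst s k P) (subst s k Q)
  | k, .pair M N => .pair (subst s k M) (subst s k N)
  | k, .proj b M => .proj b (subst s k M)
  | k, .lam M => .lam (subst s (k + 1) M)
  | k, .app M N => .app (subst s k M) (subst s k N)
  | k, .fix M => .fix (subst s (k + 1) M)
  | _, .czero => .czero
  | _, .cone => .cone
  | k, .cadd M N => .cadd (subst s k M) (subst s k N)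

/-- The cost numeral `⌜n⌝`, the right-associated sum of `n` unit costs. -/
def cnum : ℕ → Tm
  | 0 => .czero
  | n + 1 => .cadd .cone (cnum n)

/-- The `n`-th syntactic unfolding of `fix x. M`:
`fix⁰ x.M = fix x.x` and `fix^{n+1} x.M = M[fixⁿ x.M / x]`. -/
def fixn (M : Tm) : ℕ → Tm
  | 0 => .fix (.var 0)
  | n + 1 => subst (fixn M n) 0 M

/-- Typing judgment `Γ ⊢ M : A` for PCFc (contexts are de Bruijn lists). -/
inductive HasTy : List Ty → Tm → Ty → Prop
  | var {Γ n A} : Γ[n]? = some A → HasTy Γ (.var n) A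
  | num {Γ n} : HasTy Γ (.num n) .nat
  | op {Γ o M N} : HasTy Γ M .nat → HasTy Γ N .nat → HasTy Γ (.op o M N) .nat
  | ifz {Γ M P Q A} : HasTy Γ M .nat → HasTy Γ P A → HasTy Γ Q A →
      HasTy Γ (.ifz M P Q) A
  | pair {Γ M N A B} : HasTy Γ M A → HasTy Γ N B → HasTy Γ (.pair M N) (.prod A B)
  | proj {Γ M A B b} : HasTy Γ M (.prod A B) → HasTy Γ (.proj b M) (cond b A B)
  | lam {Γ M A B} : HasTy (A :: Γ) M B → HasTy Γ (.lam M) (.arrow A B)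
  | app {Γ M N A B} : HasTy Γ M (.arrow A B) → HasTy Γ N A → HasTy Γ (.app M N) B
  | fix {Γ M A} : HasTy (A :: Γ) M A → HasTy Γ (.fix M) A
  | czero {Γ} : HasTy Γ .czero .cost
  | cone {Γ} : HasTy Γ .cone .cost
  | cadd {Γ M N} : HasTy Γ M .cost → HasTy Γ N .cost → HasTy Γ (.cadd M N) .cost

/-- Eliminative contexts `E ::= [] | πᵢ(E) | E M`. -/
inductive ECtx
  | hole
  | proj (b : Bool) (E : ECtx)
  | app (E : ECtx) (N : Tm)

/-- Filling the hole of an eliminative context. -/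
def ECtx.fill : ECtx → Tm → Tm
  | .hole, M => M
  | .proj b E, M => .proj b (E.fill M)
  | .app E N, M => .app (E.fill M) N

/-- The size order `Γ ⊢ M ≤ N : A` of PCFc: a preorder closed under the
monotone contexts (principal positions of eliminations, bodies of
introductions of negative types, operands of arithmetic and cost sums),
containing β-axioms (reduct ≤ redex), the cost axioms (zero) and (assoc),
the rational-chain axiom (rat) and computational induction (cpind). -/
inductive SizeLe : List Ty → Tm → Tm → Ty → Prop
  | refl {Γ M A} : HasTy Γ M A → SizeLe Γ M M A
  | trans {Γ M N P A} : SizeLe Γ M N A → SizeLe Γ N P A → SizeLe Γ M P A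
  -- monotone contexts
  | proj_mono {Γ M M' A B b} : SizeLe Γ M M' (.prod A B) →
      SizeLe Γ (.proj b M) (.proj b M') (cond b A B)
  | app_mono {Γ M M' N A B} : SizeLe Γ M M' (.arrow A B) → HasTy Γ N A →
      SizeLe Γ (.app M N) (.app M' N) B
  | ifz_mono {Γ N N' P Q A} : SizeLe Γ N N' .nat → HasTy Γ P A → HasTy Γ Q A →
      SizeLe Γ (.ifz N P Q) (.ifz N' P Q) A
  | lam_mono {Γ M M' A B} : SizeLe (A :: Γ) M M' B →
      SizeLe Γ (.lam M) (.lam M') (.arrow A B)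
  | pair_mono {Γ M M' N N' A B} : SizeLe Γ M M' A → SizeLe Γ N N' B →
      SizeLe Γ (.pair M N) (.pair M' N') (.prod A B)
  | op_mono {Γ o M M' N N'} : SizeLe Γ M M' .nat → SizeLe Γ N N' .nat →
      SizeLe Γ (.op o M N) (.op o M' N') .nat
  | cadd_mono {Γ M M' N N'} : SizeLe Γ M M' .cost → SizeLe Γ N N' .cost →
      SizeLe Γ (.cadd M N) (.cadd M' N') .cost
  -- β-axioms: reduct ≤ redex
  | beta_app {Γ M N A B} : HasTy (A :: Γ) M B → HasTy Γ N A →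
      SizeLe Γ (subst N 0 M) (.app (.lam M) N) B
  | beta_proj {Γ M₁ M₂ A B b} : HasTy Γ M₁ A → HasTy Γ M₂ B →
      SizeLe Γ (cond b M₁ M₂) (.proj b (.pair M₁ M₂)) (cond b A B)
  | beta_ifz_zero {Γ P Q A} : HasTy Γ P A → HasTy Γ Q A →
      SizeLe Γ P (.ifz (.num 0) P Q) A
  | beta_ifz_succ {Γ P Q A n} : HasTy Γ P A → HasTy Γ Q A →
      SizeLe Γ Q (.ifz (.num (n + 1)) P Q) A
  | beta_op {Γ o a b} : SizeLe Γ (.num (o.den a b)) (.op o (.num a) (.num b)) .nat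
  -- cost axioms
  | czero_unit {Γ M} : HasTy Γ M .cost → SizeLe Γ M (.cadd .czero M) .cost
  | cadd_assoc {Γ L M N} : HasTy Γ L .cost → HasTy Γ M .cost → HasTy Γ N .cost →
      SizeLe Γ (.cadd (.cadd L M) N) (.cadd L (.cadd M N)) .cost
  -- fixed point axioms
  | rat {Γ M A n} : HasTy (A :: Γ) M A →
      SizeLe Γ (fixn M (n + 1)) (fixn M n) A
  | cpind {Γ M E' A B} {E : ECtx} : HasTy (A :: Γ) E' A →
      (∀ n : ℕ, SizeLe Γ M (E.fill (fixn E' n)) B) →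
      SizeLe Γ M (E.fill (.fix E')) B

/-- Canonical cost values and the cost they denote: `0̂` denotes `0`,
`1̂` denotes `1`, and a sum of canonical cost values denotes the sum. -/
inductive CVal : Tm → ℕ → Prop
  | zero : CVal .czero 0
  | one : CVal .cone 1
  | add {V W a b} : CVal V a → CVal W b → CVal (.cadd V W) (a + b)

/-- The (costless) call-by-name big-step semantics `M ⇓ V` of PCFc. -/
inductive Evalc : Tm → Tm → Prop
  | num {n} : Evalc (.num n) (.num n)
  | op {o M N a b} : Evalc M (.num a) → Evalc N (.num b) →
      Evalc (.op o M N) (.num (o.den a b))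
  | ifz_zero {M P Q V} : Evalc M (.num 0) → Evalc P V → Evalc (.ifz M P Q) V
  | ifz_succ {M P Q V k} : Evalc M (.num (k + 1)) → Evalc Q V → Evalc (.ifz M P Q) V
  | pair {M N} : Evalc (.pair M N) (.pair M N)
  | proj {M M₁ M₂ V b} : Evalc M (.pair M₁ M₂) → Evalc (cond b M₁ M₂) V →
      Evalc (.proj b M) V
  | lam {M} : Evalc (.lam M) (.lam M)
  | app {M N B V} : Evalc M (.lam B) → Evalc (subst N 0 B) V → Evalc (.app M N) V
  | fix {M V} : Evalc (subst (.fix M) 0 M) V → Evalc (.fix M) V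
  | czero : Evalc .czero .czero
  | cone : Evalc .cone .cone
  | cadd {M N V W a b} : Evalc M V → CVal V a → Evalc N W → CVal W b →
      Evalc (.cadd M N) (cnum (a + b))

/-- `M` is bounded: it evaluates to some canonical form. -/
def Bounded (M : Tm) : Prop := ∃ V, Evalc M V

end PCFc

namespace PCFc

/-!
The size order is interpreted by a logical relation on closed terms. At ground types `N` is
related to `M` when every value of `M` is matched by a value of `N` carrying the same numeral or
cost; at product and function types, `N` must be bounded whenever `M` is, and the projections,
resp. the applications to closed arguments, must be related. Every rule of `≤` is sound for
closing substitutions (the fundamental lemma), and related terms reflect boundedness.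

The fixed-point rules are the substantial cases. (rat) holds because `fixⁿ x. M` is `fixⁿ⁺¹ x. M`
with a subterm replaced by the divergent `fix x. x`, which can only destroy termination.
(cpind) holds because an evaluation of `E[fix x. M]` unfolds the fixed point only finitely often,
so it is replayed by `E[fixⁿ x. M]` for `n` large enough.
-/

/-! ## Substitution -/

theorem shift_shift (M : Tm) (c e : ℕ) :
    shift (e + c + 1) (shift c M) = shift c (shift (e + c) M) := by
  induction M generalizing c with
  | var n =>
    simp only [shift]
    split_ifs <;> simp only [shift] <;> split_ifs <;> first | rfl | omega
  | lam M ih => exact congrArg Tm.lam (ih (c + 1))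
  | fix M ih => exact congrArg Tm.fix (ih (c + 1))
  | _ => simp only [shift, *]

theorem shift_shift_iterate (X : Tm) (d k : ℕ) :
    shift (d + k) ((shift 0)^[k] X) = (shift 0)^[k] (shift d X) := by
  induction k with
  | zero => rfl
  | succ k ih =>
    rw [Function.iterate_succ_apply', Function.iterate_succ_apply', ← ih]
    exact shift_shift _ 0 (d + k)

theorem shift_shift_iterate_of_le (P : Tm) {c m : ℕ} (h : c ≤ m) :
    shift c ((shift 0)^[m] P) = (shift 0)^[m + 1] P := by
  obtain ⟨e, rfl⟩ := Nat.exists_eq_add_of_le h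
  have key := shift_shift_iterate ((shift 0)^[e] P) 0 c
  rw [Nat.zero_add] at key
  rw [Function.iterate_add_apply, key, ← Function.iterate_succ_apply' (shift 0) e P,
    ← Function.iterate_add_apply]
  rfl

theorem subst_shift (P M : Tm) (c d : ℕ) :
    subst P (d + c + 1) (shift c M) = shift c (subst P (d + c) M) := by
  induction M generalizing c with
  | var n =>
    simp only [shift, subst]
    split_ifs <;> simp only [shift, subst] <;> split_ifs <;>
      first
        | rfl | omega | (congr 1; omega)
        | exact (shift_shift_iterate_of_le P (by omega)).symm
  | lam M ih => exact congrArg Tm.lam (ih (c + 1))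
  | fix M ih => exact congrArg Tm.fix (ih (c + 1))
  | _ => simp only [shift, subst, *]

theorem subst_shift_iterate (P X : Tm) (d j : ℕ) :
    subst P (d + j) ((shift 0)^[j] X) = (shift 0)^[j] (subst P d X) := by
  induction j with
  | zero => rfl
  | succ j ih =>
    rw [Function.iterate_succ_apply', Function.iterate_succ_apply', ← ih]
    exact subst_shift P _ 0 (d + j)

theorem subst_shift_self (s M : Tm) (k : ℕ) : subst s k (shift k M) = M := by
  induction M generalizing k with
  | var n =>
    simp only [shift]
    split_ifs <;> simp only [subst] <;> split_ifs <;> first | rfl | omega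
  | lam M ih => exact congrArg Tm.lam (ih (k + 1))
  | fix M ih => exact congrArg Tm.fix (ih (k + 1))
  | _ => simp only [shift, subst, *]

theorem subst_shift_iterate_succ (R P : Tm) (j e : ℕ) :
    subst R j ((shift 0)^[e + j + 1] P) = (shift 0)^[e + j] P := by
  calc subst R j ((shift 0)^[e + j + 1] P)
      = subst R (0 + j) ((shift 0)^[j] (shift 0 ((shift 0)^[e] P))) := by
        rw [Nat.zero_add, ← Function.iterate_succ_apply' (shift 0) e P,
          ← Function.iterate_add_apply]
        congr 2
        omega
    _ = (shift 0)^[e + j] P := by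
        rw [subst_shift_iterate, subst_shift_self, ← Function.iterate_add_apply, Nat.add_comm]

theorem subst_subst (P Q M : Tm) (j d : ℕ) :
    subst P (d + j) (subst Q j M) = subst (subst P d Q) j (subst P (d + j + 1) M) := by
  induction M generalizing j with
  | var n =>
    simp only [subst]
    split_ifs <;> (try simp only [subst]) <;> (try split_ifs) <;>
      first
        | rfl | omega
        | exact subst_shift_iterate P Q d j
        | exact (subst_shift_iterate_succ (subst P d Q) P j d).symm
  | lam M ih => exact congrArg Tm.lam (ih (j + 1))
  | fix M ih => exact congrArg Tm.fix (ih (j + 1))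
  | num | czero | cone => rfl
  | _ => simp only [subst, *]

theorem shift_subst (Q M : Tm) (k d : ℕ) :
    shift (d + k) (subst Q k M) = subst (shift d Q) k (shift (d + k + 1) M) := by
  induction M generalizing k with
  | var n =>
    simp only [shift, subst]
    split_ifs <;> (try simp only [shift, subst]) <;> (try split_ifs) <;>
      first
        | rfl | omega | (congr 1; omega)
        | exact shift_shift_iterate Q d k
  | lam M ih => exact congrArg Tm.lam (ih (k + 1))
  | fix M ih => exact congrArg Tm.fix (ih (k + 1))
  | _ => simp only [shift, subst, *]

theorem shift_fixn (s : Tm) (c k : ℕ) : shift c (fixn s k) = fixn (shift (c + 1) s) k := by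
  induction k with
  | zero => rfl
  | succ k ih => rw [fixn, fixn, ← ih, ← shift_subst (fixn s k) s 0 c]; rfl

theorem subst_fixn (P s : Tm) (i k : ℕ) : subst P i (fixn s k) = fixn (subst P (i + 1) s) k := by
  induction k with
  | zero => rfl
  | succ k ih => rw [fixn, fixn, ← ih, ← subst_subst P (fixn s k) s 0 i]; rfl

section typing

variable {Γ : List Ty} {M : Tm} {A : Ty}

theorem HasTy.weaken (h : HasTy Γ M A) (Δ : List Ty) : HasTy (Γ ++ Δ) M A := by
  induction h with
  | var hn => exact .var (by rw [List.getElem?_append_left (List.getElem?_eq_some_iff.1 hn).1, hn])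
  | num => exact .num
  | op _ _ ih₁ ih₂ => exact .op ih₁ ih₂
  | ifz _ _ _ ih₁ ih₂ ih₃ => exact .ifz ih₁ ih₂ ih₃
  | pair _ _ ih₁ ih₂ => exact .pair ih₁ ih₂
  | proj _ ih => exact .proj ih
  | lam _ ih => exact .lam ih
  | app _ _ ih₁ ih₂ => exact .app ih₁ ih₂
  | fix _ ih => exact .fix ih
  | czero => exact .czero
  | cone => exact .cone
  | cadd _ _ ih₁ ih₂ => exact .cadd ih₁ ih₂

theorem HasTy.shift_eq (h : HasTy Γ M A) {c : ℕ} (hc : Γ.length ≤ c) : shift c M = M := by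
  induction h generalizing c with
  | var hn => simp only [shift, if_pos ((List.getElem?_eq_some_iff.1 hn).1.trans_le hc)]
  | lam _ ih => exact congrArg Tm.lam (ih (Nat.succ_le_succ hc))
  | fix _ ih => exact congrArg Tm.fix (ih (Nat.succ_le_succ hc))
  | _ => simp only [shift, *]

theorem HasTy.subst_eq (h : HasTy Γ M A) (s : Tm) {k : ℕ} (hk : Γ.length ≤ k) :
    subst s k M = M := by
  induction h generalizing k with
  | var hn =>
    have := (List.getElem?_eq_some_iff.1 hn).1
    rw [PCFc.subst, if_neg (by omega), if_neg (by omega)]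
  | lam _ ih => exact congrArg Tm.lam (ih (Nat.succ_le_succ hk))
  | fix _ ih => exact congrArg Tm.fix (ih (Nat.succ_le_succ hk))
  | _ => simp only [subst, *]

theorem HasTy.shift_iterate_eq {P : Tm} (h : HasTy [] P A) (k : ℕ) : (shift 0)^[k] P = P :=
  Function.iterate_fixed (h.shift_eq le_rfl) k

theorem HasTy.subst {Γ₁ Γ₂ : List Ty} {B : Ty} {P : Tm} (h : HasTy (Γ₁ ++ A :: Γ₂) M B)
    (hP : HasTy [] P A) : HasTy (Γ₁ ++ Γ₂) (subst P Γ₁.length M) B := by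
  generalize hΓ : Γ₁ ++ A :: Γ₂ = Γ at h
  induction h generalizing Γ₁ with
  | @var Γ n C hn =>
    subst hΓ
    rcases lt_trichotomy n Γ₁.length with hlt | rfl | hgt
    · rw [PCFc.subst, if_neg hlt.ne, if_neg (lt_asymm hlt)]
      exact .var (by rwa [List.getElem?_append_left hlt] at hn ⊢)
    · rw [List.getElem?_append_right le_rfl, Nat.sub_self, List.getElem?_cons_zero,
        Option.some_inj] at hn
      subst hn
      rw [PCFc.subst, if_pos rfl, hP.shift_iterate_eq]
      exact hP.weaken (Γ₁ ++ Γ₂)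
    · rw [List.getElem?_append_right hgt.le, show n - Γ₁.length = n - 1 - Γ₁.length + 1 by omega,
        List.getElem?_cons_succ, ← List.getElem?_append_right (by omega)] at hn
      rw [PCFc.subst, if_neg hgt.ne', if_pos hgt]
      exact .var hn
  | lam _ ih => subst hΓ; exact .lam (ih (Γ₁ := _ :: Γ₁) rfl)
  | fix _ ih => subst hΓ; exact .fix (ih (Γ₁ := _ :: Γ₁) rfl)
  | num => exact .num
  | op _ _ ih₁ ih₂ => exact .op (ih₁ hΓ) (ih₂ hΓ)
  | ifz _ _ _ ih₁ ih₂ ih₃ => exact .ifz (ih₁ hΓ) (ih₂ hΓ) (ih₃ hΓ)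
  | pair _ _ ih₁ ih₂ => exact .pair (ih₁ hΓ) (ih₂ hΓ)
  | proj _ ih => exact .proj (ih hΓ)
  | app _ _ ih₁ ih₂ => exact .app (ih₁ hΓ) (ih₂ hΓ)
  | czero => exact .czero
  | cone => exact .cone
  | cadd _ _ ih₁ ih₂ => exact .cadd (ih₁ hΓ) (ih₂ hΓ)

end typing

/-! ## Closing substitutions -/

/-- `substList [P₀, …, Pₙ] k M` substitutes `Pᵢ` for the variable `k + i` of `M`; it is a
simultaneous substitution when the `Pᵢ` are closed. -/
def substList : List Tm → ℕ → Tm → Tm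
  | [], _, M => M
  | P :: γ, k, M => substList γ k (subst P k M)

section substList

variable (γ : List Tm) (k : ℕ)

@[simp] theorem substList_num (n : ℕ) : substList γ k (.num n) = .num n := by
  induction γ <;> simp only [substList, subst, *]

@[simp] theorem substList_czero : substList γ k .czero = .czero := by
  induction γ <;> simp only [substList, subst, *]

@[simp] theorem substList_op (o : Op) (M N : Tm) :
    substList γ k (.op o M N) = .op o (substList γ k M) (substList γ k N) := by
  induction γ generalizing M N <;> simp only [substList, subst, *]

@[simp] theorem substList_ifz (M P Q : Tm) :
    substList γ k (.ifz M P Q) = .ifz (substList γ k M) (substList γ k P) (substList γ k Q) := by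
  induction γ generalizing M P Q <;> simp only [substList, subst, *]

@[simp] theorem substList_pair (M N : Tm) :
    substList γ k (.pair M N) = .pair (substList γ k M) (substList γ k N) := by
  induction γ generalizing M N <;> simp only [substList, subst, *]

@[simp] theorem substList_proj (b : Bool) (M : Tm) :
    substList γ k (.proj b M) = .proj b (substList γ k M) := by
  induction γ generalizing M <;> simp only [substList, subst, *]

@[simp] theorem substList_lam (M : Tm) : substList γ k (.lam M) = .lam (substList γ (k + 1) M) := by
  induction γ generalizing M <;> simp only [substList, subst, *]

@[simp] theorem substList_app (M N : Tm) :
    substList γ k (.app M N) = .app (substList γ k M) (substList γ k N) := by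
  induction γ generalizing M N <;> simp only [substList, subst, *]

@[simp] theorem substList_fix (M : Tm) : substList γ k (.fix M) = .fix (substList γ (k + 1) M) := by
  induction γ generalizing M <;> simp only [substList, subst, *]

@[simp] theorem substList_cadd (M N : Tm) :
    substList γ k (.cadd M N) = .cadd (substList γ k M) (substList γ k N) := by
  induction γ generalizing M N <;> simp only [substList, subst, *]

theorem substList_var_of_lt {n : ℕ} (hn : n < k) : substList γ k (.var n) = .var n := by
  induction γ with
  | nil => rfl
  | cons P γ ih => rw [substList, subst, if_neg hn.ne, if_neg (Nat.not_lt.2 hn.le), ih]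

theorem substList_subst (Q M : Tm) :
    substList γ 0 (subst Q 0 M) = subst (substList γ 0 Q) 0 (substList γ 1 M) := by
  induction γ generalizing Q M with
  | nil => rfl
  | cons P γ ih => rw [substList, substList, substList, ← ih, subst_subst P Q M 0 0]

theorem substList_fixn (t : Tm) (n : ℕ) : substList γ 0 (fixn t n) = fixn (substList γ 1 t) n := by
  induction n with
  | zero => simp only [fixn, substList_fix, substList_var_of_lt γ 1 Nat.zero_lt_one]
  | succ n ih => rw [fixn, fixn, substList_subst, ih]

theorem HasTy.substList_eq {P : Tm} {A : Ty} (hP : HasTy [] P A) : substList γ k P = P := by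
  induction γ with
  | nil => rfl
  | cons Q γ ih => rw [substList, hP.subst_eq Q (Nat.zero_le k), ih]

def ECtx.substList : ECtx → ECtx
  | .hole => .hole
  | .proj b E => .proj b (E.substList)
  | .app E N => .app E.substList (PCFc.substList γ 0 N)

theorem substList_fill (E : ECtx) (X : Tm) :
    substList γ 0 (E.fill X) = (E.substList γ).fill (substList γ 0 X) := by
  induction E with
  | hole => rfl
  | proj b E ih => simp only [ECtx.fill, ECtx.substList, substList_proj, ih]
  | app E N ih => simp only [ECtx.fill, ECtx.substList, substList_app, ih]

end substList

theorem HasTy.substList {γ : List Tm} {Γ : List Ty} (hγ : List.Forall₂ (HasTy []) γ Γ)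
    {M : Tm} {A : Ty} (hM : HasTy Γ M A) : HasTy [] (substList γ 0 M) A := by
  induction hγ generalizing M with
  | nil => exact hM
  | cons hP _ ih => exact ih (HasTy.subst (Γ₁ := []) hM hP)

/-! ## Ground observations -/

theorem cval_cnum (m : ℕ) : CVal (cnum m) m := by
  induction m with
  | zero => exact .zero
  | succ m ih => rw [cnum, Nat.add_comm]; exact .add .one ih

theorem CVal.unique {V : Tm} {a b : ℕ} (ha : CVal V a) (hb : CVal V b) : a = b := by
  induction ha generalizing b with
  | zero => cases hb; rfl
  | one => cases hb; rfl
  | add _ _ ih₁ ih₂ => cases hb with | add hb₁ hb₂ => rw [ih₁ hb₁, ih₂ hb₂]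

def ObsLe (W V : Tm) : Prop :=
  (∀ n, V = .num n → W = .num n) ∧ ∀ a, CVal V a → CVal W a

theorem ObsLe.refl (V : Tm) : ObsLe V V := ⟨fun _ h => h, fun _ h => h⟩

theorem ObsLe.trans {U W V : Tm} (h₁ : ObsLe U W) (h₂ : ObsLe W V) : ObsLe U V :=
  ⟨fun n h => h₁.1 n (h₂.1 n h), fun a h => h₁.2 a (h₂.2 a h)⟩

def EvalLe (N M : Tm) : Prop := ∀ V, Evalc M V → ∃ W, Evalc N W ∧ ObsLe W V

theorem EvalLe.of_evalc {N M : Tm} (h : ∀ V, Evalc M V → Evalc N V) : EvalLe N M :=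
  fun V hV => ⟨V, h V hV, .refl V⟩

theorem EvalLe.trans {N M P : Tm} (h₁ : EvalLe N M) (h₂ : EvalLe M P) : EvalLe N P := by
  intro V hV
  obtain ⟨W, hW, hWV⟩ := h₂ V hV
  obtain ⟨U, hU, hUW⟩ := h₁ W hW
  exact ⟨U, hU, hUW.trans hWV⟩

theorem EvalLe.bounded {N M : Tm} (h : EvalLe N M) (hM : Bounded M) : Bounded N :=
  let ⟨_, hV⟩ := hM
  let ⟨W, hW, _⟩ := h _ hV
  ⟨W, hW⟩

theorem evalc_app_lam_iff {M N V : Tm} : Evalc (.app (.lam M) N) V ↔ Evalc (subst N 0 M) V :=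
  ⟨fun h => (by cases h with | app h₁ h₂ => cases h₁; exact h₂), .app .lam⟩

theorem evalc_proj_pair_iff {b : Bool} {M₁ M₂ V : Tm} :
    Evalc (.proj b (.pair M₁ M₂)) V ↔ Evalc (cond b M₁ M₂) V :=
  ⟨fun h => (by cases h with | proj h₁ h₂ => cases h₁; exact h₂), .proj .pair⟩

theorem evalc_ifz_zero_iff {P Q V : Tm} : Evalc (.ifz (.num 0) P Q) V ↔ Evalc P V :=
  ⟨fun h => (by cases h with | ifz_zero _ h => exact h | ifz_succ h _ => cases h), .ifz_zero .num⟩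

theorem evalc_ifz_succ_iff {n : ℕ} {P Q V : Tm} : Evalc (.ifz (.num (n + 1)) P Q) V ↔ Evalc Q V :=
  ⟨fun h => (by cases h with | ifz_zero h _ => cases h | ifz_succ _ h => exact h), .ifz_succ .num⟩

theorem evalc_op_num_iff {o : Op} {a b : ℕ} {V : Tm} :
    Evalc (.op o (.num a) (.num b)) V ↔ Evalc (.num (o.den a b)) V :=
  ⟨fun h => (by cases h with | op h₁ h₂ => cases h₁; cases h₂; exact .num),
    fun h => (by cases h; exact .op .num .num)⟩

theorem ObsLe.cnum {W : Tm} {a : ℕ} (hW : CVal W a) : ObsLe W (cnum a) :=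
  ⟨fun n h => (by cases a <;> cases h), fun b hb => (cval_cnum a).unique hb ▸ hW⟩

theorem EvalLe.op {o : Op} {M M' N N' : Tm} (hM : EvalLe M M') (hN : EvalLe N N') :
    EvalLe (.op o M N) (.op o M' N') := by
  intro V hV
  cases hV with
  | op h₁ h₂ =>
    obtain ⟨W₁, hW₁, hV₁⟩ := hM _ h₁
    obtain ⟨W₂, hW₂, hV₂⟩ := hN _ h₂
    rw [hV₁.1 _ rfl] at hW₁
    rw [hV₂.1 _ rfl] at hW₂
    exact ⟨_, .op hW₁ hW₂, .refl _⟩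

theorem EvalLe.cadd {M M' N N' : Tm} (hM : EvalLe M M') (hN : EvalLe N N') :
    EvalLe (.cadd M N) (.cadd M' N') := by
  intro V hV
  cases hV with
  | cadd h₁ hc₁ h₂ hc₂ =>
    obtain ⟨W₁, hW₁, hV₁⟩ := hM _ h₁
    obtain ⟨W₂, hW₂, hV₂⟩ := hN _ h₂
    exact ⟨_, .cadd hW₁ (hV₁.2 _ hc₁) hW₂ (hV₂.2 _ hc₂), .refl _⟩

theorem evalLe_czero_cadd (M : Tm) : EvalLe M (.cadd .czero M) := by
  intro V hV
  cases hV with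
  | cadd h₁ hc₁ h₂ hc₂ =>
    cases h₁; cases hc₁
    exact ⟨_, h₂, Nat.zero_add _ ▸ .cnum hc₂⟩

theorem evalLe_cadd_assoc (L M N : Tm) :
    EvalLe (.cadd (.cadd L M) N) (.cadd L (.cadd M N)) := by
  intro V hV
  cases hV with
  | cadd hL hcL hMN hcMN =>
    cases hMN with
    | cadd hM hcM hN hcN =>
      refine ⟨_, .cadd (.cadd hL hcL hM hcM) (cval_cnum _) hN hcN, .cnum ?_⟩
      rw [← (cval_cnum _).unique hcMN, Nat.add_assoc]
      exact cval_cnum _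

/-! ## Approximation by the divergent term -/

/-- `BotApprox L R`: `L` is `R` with some subterms replaced by the divergent term `fix x. x`. -/
inductive BotApprox : Tm → Tm → Prop
  | var (n) : BotApprox (.var n) (.var n)
  | num (n) : BotApprox (.num n) (.num n)
  | op {o M M' N N'} : BotApprox M M' → BotApprox N N' → BotApprox (.op o M N) (.op o M' N')
  | ifz {M M' P P' Q Q'} : BotApprox M M' → BotApprox P P' → BotApprox Q Q' →
      BotApprox (.ifz M P Q) (.ifz M' P' Q')
  | pair {M M' N N'} : BotApprox M M' → BotApprox N N' → BotApprox (.pair M N) (.pair M' N')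
  | proj (b) {M M'} : BotApprox M M' → BotApprox (.proj b M) (.proj b M')
  | lam {M M'} : BotApprox M M' → BotApprox (.lam M) (.lam M')
  | app {M M' N N'} : BotApprox M M' → BotApprox N N' → BotApprox (.app M N) (.app M' N')
  | fix {M M'} : BotApprox M M' → BotApprox (.fix M) (.fix M')
  | czero : BotApprox .czero .czero
  | cone : BotApprox .cone .cone
  | cadd {M M' N N'} : BotApprox M M' → BotApprox N N' → BotApprox (.cadd M N) (.cadd M' N')
  | bot (M) : BotApprox (.fix (.var 0)) M

namespace BotApprox

theorem refl (M : Tm) : BotApprox M M := by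
  induction M with
  | var n => exact .var n
  | num n => exact .num n
  | op _ _ _ ih₁ ih₂ => exact .op ih₁ ih₂
  | ifz _ _ _ ih₁ ih₂ ih₃ => exact .ifz ih₁ ih₂ ih₃
  | pair _ _ ih₁ ih₂ => exact .pair ih₁ ih₂
  | proj b _ ih => exact .proj b ih
  | lam _ ih => exact .lam ih
  | app _ _ ih₁ ih₂ => exact .app ih₁ ih₂
  | fix _ ih => exact .fix ih
  | czero => exact .czero
  | cone => exact .cone
  | cadd _ _ ih₁ ih₂ => exact .cadd ih₁ ih₂

theorem shift {N N' : Tm} (h : BotApprox N N') (c : ℕ) : BotApprox (shift c N) (shift c N') := by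
  induction h generalizing c with
  | var n => exact refl _
  | num n => exact .num n
  | op _ _ ih₁ ih₂ => exact .op (ih₁ c) (ih₂ c)
  | ifz _ _ _ ih₁ ih₂ ih₃ => exact .ifz (ih₁ c) (ih₂ c) (ih₃ c)
  | pair _ _ ih₁ ih₂ => exact .pair (ih₁ c) (ih₂ c)
  | proj b _ ih => exact .proj b (ih c)
  | lam _ ih => exact .lam (ih (c + 1))
  | app _ _ ih₁ ih₂ => exact .app (ih₁ c) (ih₂ c)
  | fix _ ih => exact .fix (ih (c + 1))
  | czero => exact .czero
  | cone => exact .cone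
  | cadd _ _ ih₁ ih₂ => exact .cadd (ih₁ c) (ih₂ c)
  | bot M => exact .bot _

theorem shift_iterate {N N' : Tm} (h : BotApprox N N') (k : ℕ) :
    BotApprox ((PCFc.shift 0)^[k] N) ((PCFc.shift 0)^[k] N') := by
  induction k with
  | zero => exact h
  | succ k ih =>
    rw [Function.iterate_succ_apply', Function.iterate_succ_apply']
    exact ih.shift 0

theorem subst {M M' N N' : Tm} (h : BotApprox M M') (hN : BotApprox N N') (k : ℕ) :
    BotApprox (subst N k M) (subst N' k M') := by
  induction h generalizing k with
  | var n =>
    simp only [PCFc.subst]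
    split_ifs
    · exact hN.shift_iterate k
    · exact .var _
    · exact .var _
  | num n => exact .num n
  | op _ _ ih₁ ih₂ => exact .op (ih₁ k) (ih₂ k)
  | ifz _ _ _ ih₁ ih₂ ih₃ => exact .ifz (ih₁ k) (ih₂ k) (ih₃ k)
  | pair _ _ ih₁ ih₂ => exact .pair (ih₁ k) (ih₂ k)
  | proj b _ ih => exact .proj b (ih k)
  | lam _ ih => exact .lam (ih (k + 1))
  | app _ _ ih₁ ih₂ => exact .app (ih₁ k) (ih₂ k)
  | fix _ ih => exact .fix (ih (k + 1))
  | czero => exact .czero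
  | cone => exact .cone
  | cadd _ _ ih₁ ih₂ => exact .cadd (ih₁ k) (ih₂ k)
  | bot M => exact .bot _

theorem fixn_succ (t : Tm) (n : ℕ) : BotApprox (fixn t n) (fixn t (n + 1)) := by
  induction n with
  | zero => exact .bot _
  | succ n ih => exact (refl t).subst ih 0

theorem fill {X Y : Tm} (h : BotApprox X Y) (F : ECtx) : BotApprox (F.fill X) (F.fill Y) := by
  induction F with
  | hole => exact h
  | proj b F ih => exact .proj b ih
  | app F N ih => exact .app ih (refl N)

theorem obsLe {V W : Tm} (h : BotApprox V W) : ObsLe W V := by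
  refine ⟨fun n hV => by subst hV; cases h; rfl, fun a ha => ?_⟩
  induction ha generalizing W with
  | zero => cases h; exact .zero
  | one => cases h; exact .one
  | add _ _ ih₁ ih₂ => cases h with | cadd h₁ h₂ => exact .add (ih₁ h₁) (ih₂ h₂)

end BotApprox

theorem Evalc.botApprox {L R V : Tm} (hL : Evalc L V) (h : BotApprox L R) :
    ∃ W, Evalc R W ∧ BotApprox V W := by
  induction hL generalizing R with
  | num => cases h; exact ⟨_, .num, .num _⟩
  | op _ _ ih₁ ih₂ =>
    cases h with
    | op h₁ h₂ =>
      obtain ⟨W₁, hW₁, hV₁⟩ := ih₁ h₁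
      obtain ⟨W₂, hW₂, hV₂⟩ := ih₂ h₂
      cases hV₁; cases hV₂
      exact ⟨_, .op hW₁ hW₂, .num _⟩
  | ifz_zero _ _ ih₁ ih₂ =>
    cases h with
    | ifz h₁ h₂ _ =>
      obtain ⟨W₁, hW₁, hV₁⟩ := ih₁ h₁
      obtain ⟨W, hW, hV⟩ := ih₂ h₂
      cases hV₁
      exact ⟨W, .ifz_zero hW₁ hW, hV⟩
  | ifz_succ _ _ ih₁ ih₂ =>
    cases h with
    | ifz h₁ _ h₃ =>
      obtain ⟨W₁, hW₁, hV₁⟩ := ih₁ h₁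
      obtain ⟨W, hW, hV⟩ := ih₂ h₃
      cases hV₁
      exact ⟨W, .ifz_succ hW₁ hW, hV⟩
  | pair => cases h with | pair h₁ h₂ => exact ⟨_, .pair, .pair h₁ h₂⟩
  | @proj _ M₁ M₂ _ b _ _ ih₁ ih₂ =>
    cases h with
    | proj _ h₁ =>
      obtain ⟨W₁, hW₁, hV₁⟩ := ih₁ h₁
      cases hV₁ with
      | @pair _ M₁' _ M₂' hp₁ hp₂ =>
        have hb : BotApprox (cond b M₁ M₂) (cond b M₁' M₂') := by cases b <;> assumption
        obtain ⟨W, hW, hV⟩ := ih₂ hb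
        exact ⟨W, .proj hW₁ hW, hV⟩
  | lam => cases h with | lam h₁ => exact ⟨_, .lam, .lam h₁⟩
  | app _ _ ih₁ ih₂ =>
    cases h with
    | app h₁ h₂ =>
      obtain ⟨W₁, hW₁, hV₁⟩ := ih₁ h₁
      cases hV₁ with
      | lam hB =>
        obtain ⟨W, hW, hV⟩ := ih₂ (hB.subst h₂ 0)
        exact ⟨W, .app hW₁ hW, hV⟩
  | fix _ ih =>
    cases h with
    | fix hB =>
      obtain ⟨W, hW, hV⟩ := ih (hB.subst (.fix hB) 0)
      exact ⟨W, .fix hW, hV⟩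
    | bot R => exact ih (.bot R) -- `fix x. x` unfolds to itself
  | czero => cases h; exact ⟨_, .czero, .czero⟩
  | cone => cases h; exact ⟨_, .cone, .cone⟩
  | cadd _ hc₁ _ hc₂ ih₁ ih₂ =>
    cases h with
    | cadd h₁ h₂ =>
      obtain ⟨W₁, hW₁, hV₁⟩ := ih₁ h₁
      obtain ⟨W₂, hW₂, hV₂⟩ := ih₂ h₂
      exact ⟨_, .cadd hW₁ (hV₁.obsLe.2 _ hc₁) hW₂ (hV₂.obsLe.2 _ hc₂), .refl _⟩

theorem BotApprox.evalLe {L R : Tm} (h : BotApprox L R) : EvalLe R L := fun _ hV =>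
  let ⟨W, hW, hVW⟩ := hV.botApprox h
  ⟨W, hW, hVW.obsLe⟩

/-! ## Finite unrolling of fixed points -/

/-- `Unrolled k L M`: `L` is `M` with some subterms `fix x. B` replaced by unfoldings
`fixⁱ x. s` with `k ≤ i`, where `s` is again related to `B`. -/
inductive Unrolled (k : ℕ) : Tm → Tm → Prop
  | var (n) : Unrolled k (.var n) (.var n)
  | num (n) : Unrolled k (.num n) (.num n)
  | op {o M M' N N'} : Unrolled k M M' → Unrolled k N N' → Unrolled k (.op o M N) (.op o M' N')
  | ifz {M M' P P' Q Q'} : Unrolled k M M' → Unrolled k P P' → Unrolled k Q Q' →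
      Unrolled k (.ifz M P Q) (.ifz M' P' Q')
  | pair {M M' N N'} : Unrolled k M M' → Unrolled k N N' → Unrolled k (.pair M N) (.pair M' N')
  | proj (b) {M M'} : Unrolled k M M' → Unrolled k (.proj b M) (.proj b M')
  | lam {M M'} : Unrolled k M M' → Unrolled k (.lam M) (.lam M')
  | app {M M' N N'} : Unrolled k M M' → Unrolled k N N' → Unrolled k (.app M N) (.app M' N')
  | fix {M M'} : Unrolled k M M' → Unrolled k (.fix M) (.fix M')
  | czero : Unrolled k .czero .czero
  | cone : Unrolled k .cone .cone
  | cadd {M M' N N'} : Unrolled k M M' → Unrolled k N N' → Unrolled k (.cadd M N) (.cadd M' N')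
  | fixn {s B} (i) : k ≤ i → Unrolled k s B → Unrolled k (fixn s i) (.fix B)

namespace Unrolled

variable {k : ℕ}

theorem refl (k : ℕ) (M : Tm) : Unrolled k M M := by
  induction M with
  | var n => exact .var n
  | num n => exact .num n
  | op _ _ _ ih₁ ih₂ => exact .op ih₁ ih₂
  | ifz _ _ _ ih₁ ih₂ ih₃ => exact .ifz ih₁ ih₂ ih₃
  | pair _ _ ih₁ ih₂ => exact .pair ih₁ ih₂
  | proj b _ ih => exact .proj b ih
  | lam _ ih => exact .lam ih
  | app _ _ ih₁ ih₂ => exact .app ih₁ ih₂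
  | fix _ ih => exact .fix ih
  | czero => exact .czero
  | cone => exact .cone
  | cadd _ _ ih₁ ih₂ => exact .cadd ih₁ ih₂

theorem mono {L M : Tm} (h : Unrolled k L M) {k' : ℕ} (hk : k' ≤ k) : Unrolled k' L M := by
  induction h with
  | var n => exact .var n
  | num n => exact .num n
  | op _ _ ih₁ ih₂ => exact .op ih₁ ih₂
  | ifz _ _ _ ih₁ ih₂ ih₃ => exact .ifz ih₁ ih₂ ih₃
  | pair _ _ ih₁ ih₂ => exact .pair ih₁ ih₂
  | proj b _ ih => exact .proj b ih
  | lam _ ih => exact .lam ih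
  | app _ _ ih₁ ih₂ => exact .app ih₁ ih₂
  | fix _ ih => exact .fix ih
  | czero => exact .czero
  | cone => exact .cone
  | cadd _ _ ih₁ ih₂ => exact .cadd ih₁ ih₂
  | fixn i hi _ ih => exact .fixn i (hk.trans hi) ih

theorem shift {L M : Tm} (h : Unrolled k L M) (c : ℕ) : Unrolled k (shift c L) (shift c M) := by
  induction h generalizing c with
  | var n => exact refl k _
  | num n => exact .num n
  | op _ _ ih₁ ih₂ => exact .op (ih₁ c) (ih₂ c)
  | ifz _ _ _ ih₁ ih₂ ih₃ => exact .ifz (ih₁ c) (ih₂ c) (ih₃ c)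
  | pair _ _ ih₁ ih₂ => exact .pair (ih₁ c) (ih₂ c)
  | proj b _ ih => exact .proj b (ih c)
  | lam _ ih => exact .lam (ih (c + 1))
  | app _ _ ih₁ ih₂ => exact .app (ih₁ c) (ih₂ c)
  | fix _ ih => exact .fix (ih (c + 1))
  | czero => exact .czero
  | cone => exact .cone
  | cadd _ _ ih₁ ih₂ => exact .cadd (ih₁ c) (ih₂ c)
  | fixn i hi _ ih => rw [shift_fixn]; exact .fixn i hi (ih (c + 1))

theorem shift_iterate {L M : Tm} (h : Unrolled k L M) (j : ℕ) :
    Unrolled k ((PCFc.shift 0)^[j] L) ((PCFc.shift 0)^[j] M) := by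
  induction j with
  | zero => exact h
  | succ j ih =>
    rw [Function.iterate_succ_apply', Function.iterate_succ_apply']
    exact ih.shift 0

theorem subst {L M L' M' : Tm} (h : Unrolled k L M) (h' : Unrolled k L' M') (i : ℕ) :
    Unrolled k (subst L' i L) (subst M' i M) := by
  induction h generalizing i with
  | var n =>
    simp only [PCFc.subst]
    split_ifs
    · exact h'.shift_iterate i
    · exact .var _
    · exact .var _
  | num n => exact .num n
  | op _ _ ih₁ ih₂ => exact .op (ih₁ i) (ih₂ i)
  | ifz _ _ _ ih₁ ih₂ ih₃ => exact .ifz (ih₁ i) (ih₂ i) (ih₃ i)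
  | pair _ _ ih₁ ih₂ => exact .pair (ih₁ i) (ih₂ i)
  | proj b _ ih => exact .proj b (ih i)
  | lam _ ih => exact .lam (ih (i + 1))
  | app _ _ ih₁ ih₂ => exact .app (ih₁ i) (ih₂ i)
  | fix _ ih => exact .fix (ih (i + 1))
  | czero => exact .czero
  | cone => exact .cone
  | cadd _ _ ih₁ ih₂ => exact .cadd (ih₁ i) (ih₂ i)
  | fixn j hj _ ih => rw [subst_fixn]; exact .fixn j hj (ih (i + 1))

theorem fill {X Y : Tm} (h : Unrolled k X Y) (F : ECtx) : Unrolled k (F.fill X) (F.fill Y) := by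
  induction F with
  | hole => exact h
  | proj b F ih => exact .proj b ih
  | app F N ih => exact .app ih (refl k N)

theorem obsLe {W V : Tm} (h : Unrolled k W V) : ObsLe W V := by
  refine ⟨fun n hV => by subst hV; cases h; rfl, fun a ha => ?_⟩
  induction ha generalizing W with
  | zero => cases h; exact .zero
  | one => cases h; exact .one
  | add _ _ ih₁ ih₂ => cases h with | cadd h₁ h₂ => exact .add (ih₁ h₁) (ih₂ h₂)

end Unrolled

/-- `k` bounds the number of fixed-point unfoldings performed by the evaluation of `M`. -/
theorem Evalc.unrolled {M V : Tm} (hM : Evalc M V) (j : ℕ) :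
    ∃ k, ∀ {L}, Unrolled k L M → ∃ W, Evalc L W ∧ Unrolled j W V := by
  induction hM generalizing j with
  | num => exact ⟨0, fun hL => by cases hL; exact ⟨_, .num, .num _⟩⟩
  | op _ _ ih₁ ih₂ =>
    obtain ⟨k₁, ih₁⟩ := ih₁ 0
    obtain ⟨k₂, ih₂⟩ := ih₂ 0
    refine ⟨max k₁ k₂, fun hL => ?_⟩
    cases hL with
    | op h₁ h₂ =>
      obtain ⟨W₁, hW₁, hV₁⟩ := ih₁ (h₁.mono (le_max_left _ _))
      obtain ⟨W₂, hW₂, hV₂⟩ := ih₂ (h₂.mono (le_max_right _ _))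
      cases hV₁; cases hV₂
      exact ⟨_, .op hW₁ hW₂, .num _⟩
  | ifz_zero _ _ ih₁ ih₂ =>
    obtain ⟨k₁, ih₁⟩ := ih₁ 0
    obtain ⟨k₂, ih₂⟩ := ih₂ j
    refine ⟨max k₁ k₂, fun hL => ?_⟩
    cases hL with
    | ifz h₁ h₂ _ =>
      obtain ⟨W₁, hW₁, hV₁⟩ := ih₁ (h₁.mono (le_max_left _ _))
      obtain ⟨W, hW, hV⟩ := ih₂ (h₂.mono (le_max_right _ _))
      cases hV₁
      exact ⟨W, .ifz_zero hW₁ hW, hV⟩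
  | ifz_succ _ _ ih₁ ih₂ =>
    obtain ⟨k₁, ih₁⟩ := ih₁ 0
    obtain ⟨k₂, ih₂⟩ := ih₂ j
    refine ⟨max k₁ k₂, fun hL => ?_⟩
    cases hL with
    | ifz h₁ _ h₃ =>
      obtain ⟨W₁, hW₁, hV₁⟩ := ih₁ (h₁.mono (le_max_left _ _))
      obtain ⟨W, hW, hV⟩ := ih₂ (h₃.mono (le_max_right _ _))
      cases hV₁
      exact ⟨W, .ifz_succ hW₁ hW, hV⟩
  | pair => exact ⟨j, fun hL => by cases hL with | pair h₁ h₂ => exact ⟨_, .pair, .pair h₁ h₂⟩⟩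
  | @proj _ M₁ M₂ _ b _ _ ih₁ ih₂ =>
    obtain ⟨k₂, ih₂⟩ := ih₂ j
    obtain ⟨k₁, ih₁⟩ := ih₁ k₂
    refine ⟨k₁, fun hL => ?_⟩
    cases hL with
    | proj _ h₁ =>
      obtain ⟨W₁, hW₁, hV₁⟩ := ih₁ h₁
      cases hV₁ with
      | @pair L₁ _ L₂ _ hp₁ hp₂ =>
        have hb : Unrolled k₂ (cond b L₁ L₂) (cond b M₁ M₂) := by cases b <;> assumption
        obtain ⟨W, hW, hV⟩ := ih₂ hb
        exact ⟨W, .proj hW₁ hW, hV⟩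
  | lam => exact ⟨j, fun hL => by cases hL with | lam h₁ => exact ⟨_, .lam, .lam h₁⟩⟩
  | app _ _ ih₁ ih₂ =>
    obtain ⟨k₂, ih₂⟩ := ih₂ j
    obtain ⟨k₁, ih₁⟩ := ih₁ k₂
    refine ⟨max k₁ k₂, fun hL => ?_⟩
    cases hL with
    | app h₁ h₂ =>
      obtain ⟨W₁, hW₁, hV₁⟩ := ih₁ (h₁.mono (le_max_left _ _))
      cases hV₁ with
      | lam hB =>
        obtain ⟨W, hW, hV⟩ := ih₂ (hB.subst (h₂.mono (le_max_right _ _)) 0)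
        exact ⟨W, .app hW₁ hW, hV⟩
  | fix _ ih =>
    obtain ⟨k, ih⟩ := ih j
    refine ⟨k + 1, fun hL => ?_⟩
    cases hL with
    | fix hB =>
      have hB := hB.mono (Nat.le_succ k)
      obtain ⟨W, hW, hV⟩ := ih (hB.subst (.fix hB) 0)
      exact ⟨W, .fix hW, hV⟩
    | fixn _ hi hB =>
      obtain ⟨i, rfl⟩ := Nat.exists_eq_add_of_le' (Nat.one_le_of_lt hi)
      have hB := hB.mono (Nat.le_succ k)
      exact ih (hB.subst (.fixn i (Nat.le_of_succ_le_succ hi) hB) 0)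
  | czero => exact ⟨0, fun hL => by cases hL; exact ⟨_, .czero, .czero⟩⟩
  | cone => exact ⟨0, fun hL => by cases hL; exact ⟨_, .cone, .cone⟩⟩
  | cadd _ hc₁ _ hc₂ ih₁ ih₂ =>
    obtain ⟨k₁, ih₁⟩ := ih₁ 0
    obtain ⟨k₂, ih₂⟩ := ih₂ 0
    refine ⟨max k₁ k₂, fun hL => ?_⟩
    cases hL with
    | cadd h₁ h₂ =>
      obtain ⟨W₁, hW₁, hV₁⟩ := ih₁ (h₁.mono (le_max_left _ _))
      obtain ⟨W₂, hW₂, hV₂⟩ := ih₂ (h₂.mono (le_max_right _ _))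
      exact ⟨_, .cadd hW₁ (hV₁.obsLe.2 _ hc₁) hW₂ (hV₂.obsLe.2 _ hc₂), .refl j _⟩

theorem Evalc.exists_fill_fixn {F : ECtx} {t V : Tm} (h : Evalc (F.fill (.fix t)) V) :
    ∃ n W, Evalc (F.fill (fixn t n)) W ∧ ObsLe W V := by
  obtain ⟨n, hn⟩ := h.unrolled 0
  obtain ⟨W, hW, hWV⟩ := hn ((Unrolled.fixn n le_rfl (.refl n t)).fill F)
  exact ⟨n, W, hW, hWV.obsLe⟩

theorem Bounded.exists_fill_fixn {F : ECtx} {t : Tm} (h : Bounded (F.fill (.fix t))) :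
    ∃ n, Bounded (F.fill (fixn t n)) :=
  let ⟨_, hV⟩ := h
  let ⟨n, W, hW, _⟩ := hV.exists_fill_fixn
  ⟨n, W, hW⟩

/-! ## The logical relation -/

def LogRel : Ty → Tm → Tm → Prop
  | .nat, N, M | .cost, N, M => EvalLe N M
  | .prod A B, N, M => (Bounded M → Bounded N) ∧
      LogRel A (.proj true N) (.proj true M) ∧ LogRel B (.proj false N) (.proj false M)
  | .arrow A B, N, M => (Bounded M → Bounded N) ∧
      ∀ P, HasTy [] P A → LogRel B (.app N P) (.app M P)

namespace LogRel

theorem bounded {A : Ty} {N M : Tm} (h : LogRel A N M) (hM : Bounded M) : Bounded N := by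
  cases A
  case nat | cost => exact EvalLe.bounded h hM
  case prod | arrow => exact h.1 hM

theorem of_evalc {A : Ty} {N M : Tm} (h : ∀ V, Evalc M V → Evalc N V) : LogRel A N M := by
  induction A generalizing N M with
  | nat | cost => exact EvalLe.of_evalc h
  | prod A B ihA ihB =>
    refine ⟨(EvalLe.of_evalc h).bounded, ihA ?_, ihB ?_⟩ <;>
      exact fun V hV => by cases hV with | proj h₁ h₂ => exact .proj (h _ h₁) h₂
  | arrow A B _ ihB =>
    refine ⟨(EvalLe.of_evalc h).bounded, fun P _ => ihB fun V hV => ?_⟩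
    cases hV with | app h₁ h₂ => exact .app (h _ h₁) h₂

theorem refl {A : Ty} {M : Tm} : LogRel A M M := of_evalc fun _ h => h

theorem trans {A : Ty} {N M P : Tm} (h₁ : LogRel A N M) (h₂ : LogRel A M P) : LogRel A N P := by
  induction A generalizing N M P with
  | nat | cost => exact EvalLe.trans h₁ h₂
  | prod A B ihA ihB => exact ⟨h₁.1 ∘ h₂.1, ihA h₁.2.1 h₂.2.1, ihB h₁.2.2 h₂.2.2⟩
  | arrow A B _ ihB => exact ⟨h₁.1 ∘ h₂.1, fun P hP => ihB (h₁.2 P hP) (h₂.2 P hP)⟩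

theorem congr_evalc {A : Ty} {N N' M M' : Tm} (hN : ∀ V, Evalc N V ↔ Evalc N' V)
    (hM : ∀ V, Evalc M V ↔ Evalc M' V) (h : LogRel A N M) : LogRel A N' M' :=
  (of_evalc fun V => (hN V).1).trans (h.trans (of_evalc fun V => (hM V).2))

theorem proj {A B : Ty} {N M : Tm} (h : LogRel (.prod A B) N M) (b : Bool) :
    LogRel (cond b A B) (.proj b N) (.proj b M) := by
  cases b
  exacts [h.2.2, h.2.1]

theorem pair {A B : Ty} {M M' N N' : Tm} (hM : LogRel A M M') (hN : LogRel B N N') :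
    LogRel (.prod A B) (.pair M N) (.pair M' N') :=
  ⟨fun _ => ⟨_, .pair⟩, congr_evalc (fun _ => evalc_proj_pair_iff.symm)
    (fun _ => evalc_proj_pair_iff.symm) hM, congr_evalc (fun _ => evalc_proj_pair_iff.symm)
    (fun _ => evalc_proj_pair_iff.symm) hN⟩

theorem lam {A B : Ty} {M M' : Tm}
    (h : ∀ P, HasTy [] P A → LogRel B (subst P 0 M) (subst P 0 M')) :
    LogRel (.arrow A B) (.lam M) (.lam M') :=
  ⟨fun _ => ⟨_, .lam⟩, fun P hP => congr_evalc (fun _ => evalc_app_lam_iff.symm)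
    (fun _ => evalc_app_lam_iff.symm) (h P hP)⟩

theorem ifz {A : Ty} {N N' P Q : Tm} (h : EvalLe N N') : LogRel A (.ifz N P Q) (.ifz N' P Q) := by
  refine of_evalc fun V hV => ?_
  cases hV with
  | ifz_zero h₁ h₂ =>
    obtain ⟨W, hW, hWV⟩ := h _ h₁
    exact .ifz_zero (hWV.1 _ rfl ▸ hW) h₂
  | ifz_succ h₁ h₂ =>
    obtain ⟨W, hW, hWV⟩ := h _ h₁
    exact .ifz_succ (hWV.1 _ rfl ▸ hW) h₂

theorem fill_of_evalLe {N M : Tm} (h : ∀ F : ECtx, EvalLe (F.fill N) (F.fill M)) (A : Ty)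
    (F : ECtx) : LogRel A (F.fill N) (F.fill M) := by
  induction A generalizing F with
  | nat | cost => exact h F
  | prod A B ihA ihB => exact ⟨(h F).bounded, ihA (.proj true F), ihB (.proj false F)⟩
  | arrow A B _ ihB => exact ⟨(h F).bounded, fun P _ => ihB (.app F P)⟩

theorem fixn_succ (A : Ty) (t : Tm) (n : ℕ) : LogRel A (fixn t (n + 1)) (fixn t n) :=
  fill_of_evalLe (fun F => ((BotApprox.fixn_succ t n).fill F).evalLe) A .hole

theorem bounded_fill_fix {B : Ty} {N t : Tm} {F : ECtx} (h : ∀ n, LogRel B N (F.fill (fixn t n)))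
    (hb : Bounded (F.fill (.fix t))) : Bounded N :=
  let ⟨n, hn⟩ := hb.exists_fill_fixn
  (h n).bounded hn

/-- Each observation of `F[fix t]` is already one of some `F[fixⁿ t]`, so `fix t` is the least
upper bound of its unfoldings. -/
theorem fill_fix {B : Ty} {N t : Tm} {F : ECtx} (h : ∀ n, LogRel B N (F.fill (fixn t n))) :
    LogRel B N (F.fill (.fix t)) := by
  induction B generalizing N F with
  | nat | cost =>
    intro V hV
    obtain ⟨n, W, hW, hWV⟩ := hV.exists_fill_fixn
    obtain ⟨U, hU, hUW⟩ := h n W hW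
    exact ⟨U, hU, hUW.trans hWV⟩
  | prod A B ihA ihB =>
    exact ⟨bounded_fill_fix h, ihA (F := .proj true F) fun n => (h n).2.1,
      ihB (F := .proj false F) fun n => (h n).2.2⟩
  | arrow A B _ ihB =>
    exact ⟨bounded_fill_fix h, fun P hP => ihB (F := .app F P) fun n => (h n).2 P hP⟩

end LogRel

theorem SizeLe.logRel {Γ : List Ty} {N M : Tm} {A : Ty} (h : SizeLe Γ N M A) {γ : List Tm}
    (hγ : List.Forall₂ (HasTy []) γ Γ) : LogRel A (substList γ 0 N) (substList γ 0 M) := by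
  induction h generalizing γ with
  | refl => exact .refl
  | trans _ _ ih₁ ih₂ => exact (ih₁ hγ).trans (ih₂ hγ)
  | proj_mono _ ih => simp only [substList_proj]; exact (ih hγ).proj _
  | app_mono _ hN ih => simp only [substList_app]; exact (ih hγ).2 _ (hN.substList hγ)
  | ifz_mono _ _ _ ih => simp only [substList_ifz]; exact .ifz (ih hγ)
  | lam_mono _ ih =>
    simp only [substList_lam]
    refine .lam fun P hP => ?_
    have h := ih (hγ.cons hP)
    rwa [substList, substList, substList_subst, substList_subst, hP.substList_eq] at h
  | pair_mono _ _ ih₁ ih₂ => simp only [substList_pair]; exact (ih₁ hγ).pair (ih₂ hγ)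
  | op_mono _ _ ih₁ ih₂ => simp only [substList_op]; exact EvalLe.op (ih₁ hγ) (ih₂ hγ)
  | cadd_mono _ _ ih₁ ih₂ => simp only [substList_cadd]; exact EvalLe.cadd (ih₁ hγ) (ih₂ hγ)
  | beta_app =>
    simp only [substList_app, substList_lam, substList_subst]
    exact .of_evalc fun _ => evalc_app_lam_iff.1
  | beta_proj =>
    simp only [substList_proj, substList_pair, Bool.apply_cond (substList γ 0)]
    exact .of_evalc fun _ => evalc_proj_pair_iff.1
  | beta_ifz_zero =>
    simp only [substList_ifz, substList_num]
    exact .of_evalc fun _ => evalc_ifz_zero_iff.1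
  | beta_ifz_succ =>
    simp only [substList_ifz, substList_num]
    exact .of_evalc fun _ => evalc_ifz_succ_iff.1
  | beta_op =>
    simp only [substList_op, substList_num]
    exact .of_evalc fun _ => evalc_op_num_iff.1
  | czero_unit => simp only [substList_cadd, substList_czero]; exact evalLe_czero_cadd _
  | cadd_assoc => simp only [substList_cadd]; exact evalLe_cadd_assoc _ _ _
  | rat => simp only [substList_fixn]; exact .fixn_succ _ _ _
  | cpind _ _ ih =>
    simp only [substList_fill, substList_fix]
    exact .fill_fix fun n => by simpa only [substList_fill, substList_fixn] using ih n hγ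

/-- bounded terms form a lower set in the size order: if
`⊢ N ≤ M : A` and `M` is bounded (evaluates to a canonical form), then
`N` is bounded. -/
theorem bounded_lower_set {N M : Tm} {A : Ty}
    (h : SizeLe [] N M A) (hM : Bounded M) : Bounded N :=
  (h.logRel .nil).bounded hM

end PCFc
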